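/- arXiv:1201.2806 — 4 statements merged into one kernel-verified Lean document; each statement's English description precedes it below -/
import Mathlib

section
/- Let n ≥ 1, let g be an invertible symmetric n×n real matrix, and let v, a ∈ ℝⁿ be covectors with vᵀ g⁻¹ v = 1 and vᵀ g⁻¹ a = 0; set ω = aᵀ g⁻¹ a, v̂ = g⁻¹ v, â = g⁻¹ a. Let b, m, n ∈ ℝ be such that 1 + mω ≠ 0 and D := (1+b)(1+mω) − n²ω ≠ 0. Define Q = g⁻¹ + b v̂ v̂ᵀ + m â âᵀ + n (v̂ âᵀ + â v̂ᵀ) and Q̂ = g + B v vᵀ + M a aᵀ + N (v aᵀ + a vᵀ), where B = −(b(1+mω) − n²ω)/D, M = (1/(1+mω))·(−m + n²/D), and N = −n/D. Then Q·Q̂ = 1 (the identity matrix); in particular Q is invertible with inverse Q̂. -/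
/-!
With `U = (v a)`, `S = [[b, n], [n, m]]` and `T = [[B, N], [N, M]]` one has
`Q = g⁻¹ + (g⁻¹U) S (g⁻¹U)ᵀ` and `Q̂ = g + U T Uᵀ`, and the Gram matrix `Uᵀ g⁻¹ U` is
`Ω = diag(1, ω)`. Expanding, `Q Q̂ = 1 + g⁻¹U (S + T + S Ω T) Uᵀ`, so it suffices that
`S + T + S Ω T = 0`, i.e. `T = -(1 + S Ω)⁻¹ S`; for the paper's `B, M, N` this is four scalar
identities, each a consequence of the defining equation of `D`.
-/

open Matrix

theorem add_mul_mul_transpose_mul_add_eq_one {ι κ R : Type*} [Fintype ι] [DecidableEq ι]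
    [Fintype κ] [CommRing R]
    {g h : Matrix ι ι R} (hhg : h * g = 1) (hh : h.IsSymm)
    (U : Matrix ι κ R) {S T Ω : Matrix κ κ R} (hΩ : Uᵀ * h * U = Ω)
    (hST : S + T + S * Ω * T = 0) :
    (h + (h * U) * S * (h * U)ᵀ) * (g + U * T * Uᵀ) = 1 := by
  rw [transpose_mul, hh.eq]
  calc _ = h * g + h * U * T * Uᵀ + h * U * S * Uᵀ * (h * g)
        + h * U * S * (Uᵀ * h * U) * T * Uᵀ := by
        simp only [Matrix.add_mul, Matrix.mul_add, Matrix.mul_assoc]; abel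
    _ = 1 + h * U * (S + T + S * Ω * T) * Uᵀ := by
        rw [hhg, hΩ]
        simp only [Matrix.mul_one, Matrix.add_mul, Matrix.mul_add, Matrix.mul_assoc]; abel
    _ = 1 := by rw [hST, Matrix.mul_zero, Matrix.zero_mul, add_zero]

theorem transpose_fromCols_mul_mul_fromCols {ι ο₁ ο₂ R : Type*} [Fintype ι] [CommRing R]
    (h : Matrix ι ι R) (x : Matrix ι ο₁ R) (y : Matrix ι ο₂ R) :
    (fromCols x y)ᵀ * h * fromCols x y
      = fromBlocks (xᵀ * h * x) (xᵀ * h * y) (yᵀ * h * x) (yᵀ * h * y) := by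
  rw [transpose_fromCols, fromRows_mul, fromRows_mul_fromCols]

section PairCoeff

variable {ο R : Type*} [Fintype ο] [DecidableEq ο] [CommRing R]

def pairCoeff (p q r : R) : Matrix (ο ⊕ ο) (ο ⊕ ο) R :=
  fromBlocks (p • 1) (r • 1) (r • 1) (q • 1)

theorem fromCols_mul_pairCoeff_mul_transpose {ι : Type*} (x y : Matrix ι ο R) (p q r : R) :
    fromCols x y * (pairCoeff p q r : Matrix (ο ⊕ ο) (ο ⊕ ο) R) * (fromCols x y)ᵀ
      = p • (x * xᵀ) + q • (y * yᵀ) + r • (x * yᵀ + y * xᵀ) := by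
  rw [pairCoeff, fromCols_mul_fromBlocks, transpose_fromCols, fromCols_mul_fromRows]
  simp only [Matrix.mul_smul, Matrix.mul_one, Matrix.add_mul, Matrix.smul_mul, smul_add]
  abel

theorem pairCoeff_add_add_mul_mul_eq_zero {b m n ω B M N : R}
    (h₁ : b + B + (b * B + n * ω * N) = 0) (h₂ : n + N + (b * N + n * ω * M) = 0)
    (h₃ : n + N + (n * B + m * ω * N) = 0) (h₄ : m + M + (n * N + m * ω * M) = 0) :
    pairCoeff b m n + pairCoeff B M N + pairCoeff b m n * pairCoeff 1 ω 0 * pairCoeff B M N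
      = (0 : Matrix (ο ⊕ ο) (ο ⊕ ο) R) := by
  simp only [pairCoeff, fromBlocks_multiply, fromBlocks_add, smul_mul_smul, Matrix.mul_one,
    zero_smul, Matrix.mul_zero, add_zero, zero_add, one_smul, ← add_smul, h₁, h₂, h₃, h₄,
    fromBlocks_zero]

end PairCoeff

theorem dragged_coeff_relations {K : Type*} [Field K] {b m n ω D B M N : K}
    (hm : 1 + m * ω ≠ 0) (hD : D = (1 + b) * (1 + m * ω) - n ^ 2 * ω) (hD0 : D ≠ 0)
    (hB : B = -(b * (1 + m * ω) - n ^ 2 * ω) / D)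
    (hM : M = (1 / (1 + m * ω)) * (-m + n ^ 2 / D))
    (hN : N = -n / D) :
    b + B + (b * B + n * ω * N) = 0 ∧ n + N + (b * N + n * ω * M) = 0 ∧
      n + N + (n * B + m * ω * N) = 0 ∧ m + M + (n * N + m * ω * M) = 0 := by
  subst hB hM hN
  refine ⟨?_, ?_, ?_, ?_⟩
  · field_simp
    linear_combination b * hD
  · rw [mul_comm m ω] at hm ⊢
    field_simp
    linear_combination n * hD
  · field_simp
    linear_combination n * hD
  · field_simp
    ring

theorem general_dragged_metric_inverse_general
    (n : ℕ)
    (g : Matrix (Fin n) (Fin n) ℝ) (hsymm : g.IsSymm) (hg : IsUnit g.det)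
    (v a : Matrix (Fin n) (Fin 1) ℝ)
    (hv : vᵀ * g⁻¹ * v = 1) (hva : vᵀ * g⁻¹ * a = 0)
    (ω : ℝ) (hω : aᵀ * g⁻¹ * a = ω • (1 : Matrix (Fin 1) (Fin 1) ℝ))
    (b m nn : ℝ) (hm : 1 + m * ω ≠ 0)
    (D : ℝ) (hD : D = (1 + b) * (1 + m * ω) - nn ^ 2 * ω) (hD0 : D ≠ 0)
    (B M N : ℝ)
    (hB : B = -(b * (1 + m * ω) - nn ^ 2 * ω) / D)
    (hM : M = (1 / (1 + m * ω)) * (-m + nn ^ 2 / D))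
    (hN : N = -nn / D) :
    (g⁻¹ + b • ((g⁻¹ * v) * (g⁻¹ * v)ᵀ) + m • ((g⁻¹ * a) * (g⁻¹ * a)ᵀ)
        + nn • ((g⁻¹ * v) * (g⁻¹ * a)ᵀ + (g⁻¹ * a) * (g⁻¹ * v)ᵀ)) *
      (g + B • (v * vᵀ) + M • (a * aᵀ) + N • (v * aᵀ + a * vᵀ)) = 1 ∧
    IsUnit (g⁻¹ + b • ((g⁻¹ * v) * (g⁻¹ * v)ᵀ) + m • ((g⁻¹ * a) * (g⁻¹ * a)ᵀ)
        + nn • ((g⁻¹ * v) * (g⁻¹ * a)ᵀ + (g⁻¹ * a) * (g⁻¹ * v)ᵀ)).det ∧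
    (g⁻¹ + b • ((g⁻¹ * v) * (g⁻¹ * v)ᵀ) + m • ((g⁻¹ * a) * (g⁻¹ * a)ᵀ)
        + nn • ((g⁻¹ * v) * (g⁻¹ * a)ᵀ + (g⁻¹ * a) * (g⁻¹ * v)ᵀ))⁻¹
      = g + B • (v * vᵀ) + M • (a * aᵀ) + N • (v * aᵀ + a * vᵀ) := by
  have hav : aᵀ * g⁻¹ * v = 0 := by
    simpa [Matrix.mul_assoc, hsymm.inv.eq] using congrArg transpose hva
  have hgram : (fromCols v a)ᵀ * g⁻¹ * fromCols v a = pairCoeff 1 ω 0 := by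
    rw [transpose_fromCols_mul_mul_fromCols, hv, hva, hav, hω, pairCoeff, one_smul, zero_smul]
  obtain ⟨h₁, h₂, h₃, h₄⟩ := dragged_coeff_relations hm hD hD0 hB hM hN
  have key := add_mul_mul_transpose_mul_add_eq_one (nonsing_inv_mul g hg) hsymm.inv
    (fromCols v a) hgram (pairCoeff_add_add_mul_mul_eq_zero h₁ h₂ h₃ h₄)
  simp only [mul_fromCols, fromCols_mul_pairCoeff_mul_transpose, ← add_assoc] at key
  exact ⟨key, isUnit_det_of_right_inverse key, inv_eq_right_inv key⟩

/-- The general dragged metric `Q = g⁻¹ + b v̂v̂ᵀ + m ââᵀ + n(v̂âᵀ + âv̂ᵀ)` has covariant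
(inverse) form `Q̂ = g + B vvᵀ + M aaᵀ + N(vaᵀ + avᵀ)` with the stated coefficients. -/
theorem general_dragged_metric_inverse
    (n : ℕ) (hn : 1 ≤ n)
    (g : Matrix (Fin n) (Fin n) ℝ) (hsymm : g.IsSymm) (hg : IsUnit g.det)
    (v a : Matrix (Fin n) (Fin 1) ℝ)
    (hv : vᵀ * g⁻¹ * v = 1) (hva : vᵀ * g⁻¹ * a = 0)
    (ω : ℝ) (hω : aᵀ * g⁻¹ * a = ω • (1 : Matrix (Fin 1) (Fin 1) ℝ))
    (b m nn : ℝ) (hm : 1 + m * ω ≠ 0)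
    (D : ℝ) (hD : D = (1 + b) * (1 + m * ω) - nn ^ 2 * ω) (hD0 : D ≠ 0)
    (B M N : ℝ)
    (hB : B = -(b * (1 + m * ω) - nn ^ 2 * ω) / D)
    (hM : M = (1 / (1 + m * ω)) * (-m + nn ^ 2 / D))
    (hN : N = -nn / D) :
    (g⁻¹ + b • ((g⁻¹ * v) * (g⁻¹ * v)ᵀ) + m • ((g⁻¹ * a) * (g⁻¹ * a)ᵀ)
        + nn • ((g⁻¹ * v) * (g⁻¹ * a)ᵀ + (g⁻¹ * a) * (g⁻¹ * v)ᵀ)) *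
      (g + B • (v * vᵀ) + M • (a * aᵀ) + N • (v * aᵀ + a * vᵀ)) = 1 ∧
    IsUnit (g⁻¹ + b • ((g⁻¹ * v) * (g⁻¹ * v)ᵀ) + m • ((g⁻¹ * a) * (g⁻¹ * a)ᵀ)
        + nn • ((g⁻¹ * v) * (g⁻¹ * a)ᵀ + (g⁻¹ * a) * (g⁻¹ * v)ᵀ)).det ∧
    (g⁻¹ + b • ((g⁻¹ * v) * (g⁻¹ * v)ᵀ) + m • ((g⁻¹ * a) * (g⁻¹ * a)ᵀ)
        + nn • ((g⁻¹ * v) * (g⁻¹ * a)ᵀ + (g⁻¹ * a) * (g⁻¹ * v)ᵀ))⁻¹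
      = g + B • (v * vᵀ) + M • (a * aᵀ) + N • (v * aᵀ + a * vᵀ) :=
  general_dragged_metric_inverse_general n g hsymm hg v a hv hva ω hω b m nn hm D hD hD0 B M N hB hM
    hN
end

section
/- Let U ⊆ ℝ⁴ be open, let η = diag(1,−1,−1,−1), and let b : U → ℝ and v : U → ℝ⁴ (covariant components v_μ) be differentiable with Σ_{μ,ν} η^{μν} v_μ v_ν = 1 and 1 + b ≠ 0 on U, where η^{μν} are the entries of η⁻¹ = η and v^μ = Σ_ν η^{μν} v_ν. Define q̂_{μν} = η_{μν} − (b/(1+b)) v_μ v_ν and Γ̂^ε_{μν} = (1/2) Σ_α (η^{εα} + b v^ε v^α)(∂_ν q̂_{αμ} + ∂_μ q̂_{αν} − ∂_α q̂_{μν}). Then at every point of U and for every μ: Σ_{ε,ν} Γ̂^ε_{μν} v_ε v^ν = ((1+b)/2) Σ_{α,ν} v^α v^ν ∂_μ q̂_{αν}. -/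
open scoped BigOperators

/-- Partial derivative with respect to the μ-th coordinate of ℝ⁴. -/
noncomputable def pd (μ : Fin 4) (f : (Fin 4 → ℝ) → ℝ) (x : Fin 4 → ℝ) : ℝ :=
  fderiv ℝ f x (Pi.single μ 1)

/-- The Minkowski metric η = diag(1,−1,−1,−1). -/
noncomputable def ηm : Matrix (Fin 4) (Fin 4) ℝ := Matrix.diagonal ![1, -1, -1, -1]

/-- Contravariant components `v^μ = η^{μν} v_ν` (note `η⁻¹ = η`). -/
noncomputable def vup (v : (Fin 4 → ℝ) → Fin 4 → ℝ) (x : Fin 4 → ℝ) (μ : Fin 4) : ℝ :=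
  ∑ ν, ηm μ ν * v x ν

/-- The covariant dragged metric `q̂_{μν} = η_{μν} − (b/(1+b)) v_μ v_ν`. -/
noncomputable def qhat (b : (Fin 4 → ℝ) → ℝ) (v : (Fin 4 → ℝ) → Fin 4 → ℝ)
    (x : Fin 4 → ℝ) (μ ν : Fin 4) : ℝ :=
  ηm μ ν - (b x / (1 + b x)) * v x μ * v x ν

/-- The Christoffel symbols of the dragged metric, computed with its contravariant form
`q̂^{εα} = η^{εα} + b v^ε v^α`. -/
noncomputable def Γhat (b : (Fin 4 → ℝ) → ℝ) (v : (Fin 4 → ℝ) → Fin 4 → ℝ)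
    (ε μ ν : Fin 4) (x : Fin 4 → ℝ) : ℝ :=
  (1 / 2) * ∑ α, (ηm ε α + b x * vup v x ε * vup v x α) *
    (pd ν (fun y => qhat b v y α μ) x + pd μ (fun y => qhat b v y α ν) x
      - pd α (fun y => qhat b v y μ ν) x)

lemma etam_symm (i j : Fin 4) : ηm i j = ηm j i := by
  unfold ηm
  by_cases h : i = j
  · subst h; rfl
  · rw [Matrix.diagonal_apply_ne _ h, Matrix.diagonal_apply_ne _ (Ne.symm h)]

lemma qhat_symm (b : (Fin 4 → ℝ) → ℝ) (v : (Fin 4 → ℝ) → Fin 4 → ℝ)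
    (y : Fin 4 → ℝ) (μ ν : Fin 4) : qhat b v y μ ν = qhat b v y ν μ := by
  unfold qhat; rw [etam_symm]; ring

/-- For a unit covector field v (η-normalized) and coefficient b with 1 + b ≠ 0,
`Γ̂^ε_{μν} v_ε v^ν = ((1+b)/2) v^α v^ν ∂_μ q̂_{αν}`. -/
theorem christoffel_contraction_identity
    (U : Set (Fin 4 → ℝ)) (hUopen : IsOpen U)
    (b : (Fin 4 → ℝ) → ℝ) (v : (Fin 4 → ℝ) → Fin 4 → ℝ)
    (hbdiff : ∀ x ∈ U, DifferentiableAt ℝ b x)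
    (hvdiff : ∀ x ∈ U, ∀ μ : Fin 4, DifferentiableAt ℝ (fun y => v y μ) x)
    (hnorm : ∀ x ∈ U, ∑ μ, ∑ ν, ηm μ ν * v x μ * v x ν = 1)
    (hb0 : ∀ x ∈ U, 1 + b x ≠ 0) :
    ∀ x ∈ U, ∀ μ : Fin 4,
      ∑ ε, ∑ ν, Γhat b v ε μ ν x * v x ε * vup v x ν
        = ((1 + b x) / 2) *
            ∑ α, ∑ ν, vup v x α * vup v x ν * pd μ (fun y => qhat b v y α ν) x := by
  intro x hx μ
  set u : Fin 4 → ℝ := vup v x with hu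
  set c : ℝ := b x with hc
  -- the dummy-index symmetric derivative tensor
  set P : Fin 4 → Fin 4 → Fin 4 → ℝ := fun i j k => pd i (fun y => qhat b v y j k) x with hPdef
  have hP : ∀ i j k, P i j k = P i k j := by
    intro i j k
    have : (fun y => qhat b v y j k) = (fun y => qhat b v y k j) :=
      funext fun y => qhat_symm b v y j k
    simp only [hPdef, this]
  -- η lowering
  have hη : ∀ α, (∑ ε, ηm ε α * v x ε) = u α := by
    intro α
    rw [hu]; unfold vup
    exact Finset.sum_congr rfl fun ε _ => by rw [etam_symm]
  -- unit norm
  have hunit : (∑ ε, u ε * v x ε) = 1 := by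
    rw [← hnorm x hx]
    refine Finset.sum_congr rfl fun ε _ => ?_
    rw [hu]; unfold vup
    rw [Finset.sum_mul]
    exact Finset.sum_congr rfl fun ν _ => by ring
  -- contraction of the inverse metric with v
  have hcontract : ∀ α, (∑ ε, (ηm ε α + c * u ε * u α) * v x ε) = (1 + c) * u α := by
    intro α
    have : (∑ ε, (ηm ε α + c * u ε * u α) * v x ε)
        = (∑ ε, ηm ε α * v x ε) + c * u α * (∑ ε, u ε * v x ε) := by
      rw [Finset.mul_sum, ← Finset.sum_add_distrib]
      exact Finset.sum_congr rfl fun ε _ => by ring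
    rw [this, hη, hunit]; ring
  -- abbreviation for the Christoffel bracket
  have key : ∀ ν : Fin 4,
      (∑ ε, Γhat b v ε μ ν x * v x ε * u ν)
        = (1 / 2) * u ν * ∑ α, ((1 + c) * u α) *
            (P ν α μ + P μ α ν - P α μ ν) := by
    intro ν
    have step1 : (∑ ε, ((1 / 2) * ∑ α, (ηm ε α + c * u ε * u α) *
          (P ν α μ + P μ α ν - P α μ ν)) * v x ε * u ν)
        = (1 / 2) * u ν * ∑ ε, ∑ α, ((ηm ε α + c * u ε * u α) *
            (P ν α μ + P μ α ν - P α μ ν)) * v x ε := by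
      rw [Finset.mul_sum]
      refine Finset.sum_congr rfl fun ε _ => ?_
      rw [← Finset.sum_mul]
      ring
    calc (∑ ε, Γhat b v ε μ ν x * v x ε * u ν)
        = (1 / 2) * u ν * ∑ ε, ∑ α, ((ηm ε α + c * u ε * u α) *
            (P ν α μ + P μ α ν - P α μ ν)) * v x ε := step1
      _ = (1 / 2) * u ν * ∑ α, ∑ ε, ((ηm ε α + c * u ε * u α) *
            (P ν α μ + P μ α ν - P α μ ν)) * v x ε := by rw [Finset.sum_comm]
      _ = (1 / 2) * u ν * ∑ α, ((1 + c) * u α) * (P ν α μ + P μ α ν - P α μ ν) := by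
          congr 1
          refine Finset.sum_congr rfl fun α _ => ?_
          have : (∑ ε, ((ηm ε α + c * u ε * u α) *
              (P ν α μ + P μ α ν - P α μ ν)) * v x ε)
              = (∑ ε, (ηm ε α + c * u ε * u α) * v x ε) *
                  (P ν α μ + P μ α ν - P α μ ν) := by
            rw [Finset.sum_mul]
            exact Finset.sum_congr rfl fun ε _ => by ring
          rw [this, hcontract α]
  calc (∑ ε, ∑ ν, Γhat b v ε μ ν x * v x ε * u ν)
      = ∑ ν, ∑ ε, Γhat b v ε μ ν x * v x ε * u ν := Finset.sum_comm
    _ = ∑ ν, (1 / 2) * u ν * ∑ α, ((1 + c) * u α) *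
          (P ν α μ + P μ α ν - P α μ ν) := Finset.sum_congr rfl fun ν _ => key ν
    _ = ((1 + c) / 2) * ∑ ν, ∑ α, u ν * u α *
          (P ν α μ + P μ α ν - P α μ ν) := by
        rw [Finset.mul_sum]
        refine Finset.sum_congr rfl fun ν _ => ?_
        rw [Finset.mul_sum, Finset.mul_sum]
        exact Finset.sum_congr rfl fun α _ => by ring
    _ = ((1 + c) / 2) * ∑ ν, ∑ α, u ν * u α * P μ α ν := by
        congr 1
        have hsplit : (∑ ν, ∑ α, u ν * u α * (P ν α μ + P μ α ν - P α μ ν))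
            = (∑ ν, ∑ α, u ν * u α * P ν α μ)
              + (∑ ν, ∑ α, u ν * u α * P μ α ν)
              - (∑ ν, ∑ α, u ν * u α * P α μ ν) := by
          rw [← Finset.sum_add_distrib, ← Finset.sum_sub_distrib]
          refine Finset.sum_congr rfl fun ν _ => ?_
          rw [← Finset.sum_add_distrib, ← Finset.sum_sub_distrib]
          exact Finset.sum_congr rfl fun α _ => by ring
        have hswap : (∑ ν, ∑ α, u ν * u α * P ν α μ)
            = (∑ ν, ∑ α, u ν * u α * P α μ ν) := by
          rw [Finset.sum_comm]
          refine Finset.sum_congr rfl fun ν _ => Finset.sum_congr rfl fun α _ => ?_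
          rw [hP α ν μ]; ring
        rw [hsplit, hswap]; ring
    _ = ((1 + c) / 2) * ∑ α, ∑ ν, u α * u ν * P μ α ν := by
        rw [Finset.sum_comm]
        congr 1
        exact Finset.sum_congr rfl fun α _ => Finset.sum_congr rfl fun ν _ => by ring
end

section
/- Let U ⊆ ℝ⁴ be open, let η = diag(1,−1,−1,−1), let Ψ : U → ℝ be differentiable, and let v : U → ℝ⁴ (covariant components v_μ) be differentiable with Σ_{μ,ν} η^{μν} v_μ v_ν = 1 on U, where v^μ = Σ_ν η^{μν} v_ν. Assume the acceleration is the gradient of Ψ: for all x ∈ U and all μ, Σ_ν v^ν ∂_ν v_μ = ∂_μ Ψ. Define b = e^{−2Ψ} − 1, q̂_{μν} = η_{μν} − (b/(1+b)) v_μ v_ν, and Γ̂^ε_{μν} = (1/2) Σ_α (η^{εα} + b v^ε v^α)(∂_ν q̂_{αμ} + ∂_μ q̂_{αν} − ∂_α q̂_{μν}). Then v satisfies the geodesic equation of the dragged metric q̂: for all x ∈ U and all μ, Σ_ν v^ν (∂_ν v_μ − Σ_ε Γ̂^ε_{μν} v_ε) = 0. -/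
open scoped BigOperators

/-! Contracted with the unit field `v`, the contravariant dragged metric acts as `(1 + b) η`.
In `v^ν v^α (∂_ν q̂_{αμ} + ∂_μ q̂_{αν} - ∂_α q̂_{μν})` the outer terms cancel by the symmetry
of `q̂`, and since `v` is unit, hence orthogonal to its derivatives, the middle one is
`-∂_μ (b / (1 + b))`. So the geodesic residual is `a_μ + ½ (1 + b) ∂_μ (b / (1 + b))
= a_μ + ½ ∂_μ log (1 + b)`, which vanishes for `1 + b = e^{-2Ψ}` exactly when `a = ∇Ψ`. -/

open Filter Topology

section PartialDerivative

variable {f g : (Fin 4 → ℝ) → ℝ} {x : Fin 4 → ℝ} (μ : Fin 4)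

lemma pd_mul (hf : DifferentiableAt ℝ f x) (hg : DifferentiableAt ℝ g x) :
    pd μ (fun y => f y * g y) x = pd μ f x * g x + f x * pd μ g x := by
  simp only [pd, fderiv_fun_mul hf hg, add_apply, smul_apply, smul_eq_mul]
  ring

lemma pd_const_mul (hf : DifferentiableAt ℝ f x) (c : ℝ) :
    pd μ (fun y => c * f y) x = c * pd μ f x := by
  simp [pd, fderiv_const_mul hf]

lemma pd_const_sub (c : ℝ) : pd μ (fun y => c - f y) x = -pd μ f x := by
  simp [pd, fderiv_const_sub]

lemma pd_sum {ι : Type*} (s : Finset ι) {F : ι → (Fin 4 → ℝ) → ℝ}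
    (hF : ∀ i ∈ s, DifferentiableAt ℝ (F i) x) :
    pd μ (fun y => ∑ i ∈ s, F i y) x = ∑ i ∈ s, pd μ (F i) x := by
  simp only [pd, fderiv_fun_sum hF, sum_apply]

lemma pd_comp {φ : ℝ → ℝ} {φ' : ℝ} (hφ : HasDerivAt φ φ' (f x)) (hf : DifferentiableAt ℝ f x) :
    pd μ (fun y => φ (f y)) x = φ' * pd μ f x := by
  change fderiv ℝ (φ ∘ f) x _ = φ' * fderiv ℝ f x _
  rw [(hφ.comp_hasFDerivAt x hf.hasFDerivAt).fderiv]
  simp only [smul_apply, smul_eq_mul]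

lemma pd_eq_zero_of_eventuallyEq_const {c : ℝ} (hf : f =ᶠ[𝓝 x] fun _ => c) : pd μ f x = 0 := by
  simp [pd, hf.fderiv_eq]

end PartialDerivative

lemma ηm_comm (μ ν : Fin 4) : ηm μ ν = ηm ν μ := by
  rw [← Matrix.transpose_apply ηm, ηm, Matrix.diagonal_transpose]

section Contractions

variable (v : (Fin 4 → ℝ) → Fin 4 → ℝ) (x : Fin 4 → ℝ)

lemma sum_vup_mul (w : Fin 4 → ℝ) :
    ∑ μ, vup v x μ * w μ = ∑ μ, ∑ ν, ηm μ ν * v x μ * w ν := by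
  simp only [vup, Finset.sum_mul]
  rw [Finset.sum_comm]
  refine Finset.sum_congr rfl fun μ _ => Finset.sum_congr rfl fun ν _ => ?_
  rw [ηm_comm]

lemma pd_minkowski_sq (hv : ∀ α, DifferentiableAt ℝ (fun y => v y α) x) (μ : Fin 4) :
    pd μ (fun y => ∑ α, ∑ β, ηm α β * v y α * v y β) x
      = 2 * ∑ α, vup v x α * pd μ (fun y => v y α) x := by
  have hterm : ∀ α β, DifferentiableAt ℝ (fun y => ηm α β * v y α * v y β) x :=
    fun α β => ((hv α).const_mul _).mul (hv β)
  rw [pd_sum _ _ fun α _ => DifferentiableAt.fun_sum fun β _ => hterm α β]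
  simp only [pd_sum _ _ fun β _ => hterm _ β, pd_mul _ ((hv _).const_mul _) (hv _),
    pd_const_mul _ (hv _), sum_vup_mul]
  rw [two_mul]
  simp only [Finset.sum_add_distrib]
  congr 1
  rw [Finset.sum_comm]
  refine Finset.sum_congr rfl fun α _ => Finset.sum_congr rfl fun β _ => ?_
  rw [ηm_comm]
  ring

end Contractions

lemma sum_vup_mul_pd_eq_zero_of_eventuallyEq {v : (Fin 4 → ℝ) → Fin 4 → ℝ} {x : Fin 4 → ℝ}
    (hv : ∀ α, DifferentiableAt ℝ (fun y => v y α) x)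
    (hnorm : (fun y => ∑ α, ∑ β, ηm α β * v y α * v y β) =ᶠ[𝓝 x] fun _ => 1) (μ : Fin 4) :
    ∑ α, vup v x α * pd μ (fun y => v y α) x = 0 := by
  have h := pd_minkowski_sq v x hv μ
  rw [pd_eq_zero_of_eventuallyEq_const μ hnorm] at h
  linarith

section DraggedMetric

variable (b : (Fin 4 → ℝ) → ℝ) (v : (Fin 4 → ℝ) → Fin 4 → ℝ) (x : Fin 4 → ℝ)

lemma qhat_comm (y : Fin 4 → ℝ) (α β : Fin 4) : qhat b v y α β = qhat b v y β α := by
  simp only [qhat, ηm_comm α β]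
  ring

lemma sum_contravariant_qhat_mul (α : Fin 4) :
    ∑ ε, (ηm ε α + b x * vup v x ε * vup v x α) * v x ε
      = (1 + b x * ∑ ε, vup v x ε * v x ε) * vup v x α := by
  have hη : ∑ ε, ηm ε α * v x ε = vup v x α := by simp only [vup, ηm_comm]
  simp only [add_mul, Finset.sum_add_distrib, hη, Finset.mul_sum, Finset.sum_mul]
  rw [one_mul]
  congr 1
  exact Finset.sum_congr rfl fun ε _ => by ring

lemma sum_Γhat_mul (hN : ∑ ε, vup v x ε * v x ε = 1) (μ ν : Fin 4) :
    ∑ ε, Γhat b v ε μ ν x * v x ε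
      = (1 + b x) / 2 * ∑ α, vup v x α * (pd ν (fun y => qhat b v y α μ) x
          + pd μ (fun y => qhat b v y α ν) x - pd α (fun y => qhat b v y μ ν) x) := by
  have hinv : ∀ α, ∑ ε, (ηm ε α + b x * vup v x ε * vup v x α) * v x ε = (1 + b x) * vup v x α :=
    fun α => by rw [sum_contravariant_qhat_mul, hN, mul_one]
  simp only [Γhat, Finset.sum_mul, Finset.mul_sum]
  rw [Finset.sum_comm]
  refine Finset.sum_congr rfl fun α _ => ?_
  generalize pd ν (fun y => qhat b v y α μ) x + pd μ (fun y => qhat b v y α ν) x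
    - pd α (fun y => qhat b v y μ ν) x = T
  calc ∑ ε, 1 / 2 * ((ηm ε α + b x * vup v x ε * vup v x α) * T) * v x ε
      = 1 / 2 * T * ∑ ε, (ηm ε α + b x * vup v x ε * vup v x α) * v x ε := by
        rw [Finset.mul_sum]
        exact Finset.sum_congr rfl fun ε _ => by ring
    _ = (1 + b x) / 2 * (vup v x α * T) := by
        rw [hinv]
        ring

lemma sum_vup_vup_pd_qhat_comm (μ : Fin 4) :
    ∑ ν, ∑ α, vup v x ν * vup v x α * pd ν (fun y => qhat b v y α μ) x
      = ∑ ν, ∑ α, vup v x ν * vup v x α * pd α (fun y => qhat b v y μ ν) x := by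
  rw [Finset.sum_comm]
  refine Finset.sum_congr rfl fun α _ => Finset.sum_congr rfl fun ν _ => ?_
  simp only [qhat_comm b v _ α μ]
  ring

lemma sum_vup_mul_sum_Γhat_mul (hN : ∑ ε, vup v x ε * v x ε = 1) (μ : Fin 4) :
    ∑ ν, vup v x ν * ∑ ε, Γhat b v ε μ ν x * v x ε
      = (1 + b x) / 2 * ∑ ν, ∑ α, vup v x ν * vup v x α * pd μ (fun y => qhat b v y α ν) x := by
  calc ∑ ν, vup v x ν * ∑ ε, Γhat b v ε μ ν x * v x ε
      = (1 + b x) / 2 * ((∑ ν, ∑ α, vup v x ν * vup v x α * pd ν (fun y => qhat b v y α μ) x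
          - ∑ ν, ∑ α, vup v x ν * vup v x α * pd α (fun y => qhat b v y μ ν) x)
          + ∑ ν, ∑ α, vup v x ν * vup v x α * pd μ (fun y => qhat b v y α ν) x) := by
        simp only [sum_Γhat_mul b v x hN, Finset.mul_sum, ← Finset.sum_sub_distrib,
          ← Finset.sum_add_distrib]
        exact Finset.sum_congr rfl fun ν _ => Finset.sum_congr rfl fun α _ => by ring
    _ = _ := by rw [sum_vup_vup_pd_qhat_comm, sub_self, zero_add]

variable {b v x}

lemma pd_qhat (hf : DifferentiableAt ℝ (fun y => b y / (1 + b y)) x)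
    (hv : ∀ α, DifferentiableAt ℝ (fun y => v y α) x) (μ α β : Fin 4) :
    pd μ (fun y => qhat b v y α β) x
      = -(pd μ (fun y => b y / (1 + b y)) x * v x α * v x β + b x / (1 + b x)
          * (pd μ (fun y => v y α) x * v x β + v x α * pd μ (fun y => v y β) x)) := by
  simp only [qhat]
  rw [pd_const_sub, pd_mul μ (hf.fun_mul (hv α)) (hv β), pd_mul μ hf (hv α)]
  ring

lemma sum_vup_vup_pd_qhat (hf : DifferentiableAt ℝ (fun y => b y / (1 + b y)) x)
    (hv : ∀ α, DifferentiableAt ℝ (fun y => v y α) x) (hN : ∑ ε, vup v x ε * v x ε = 1)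
    (hO : ∀ μ, ∑ α, vup v x α * pd μ (fun y => v y α) x = 0) (μ : Fin 4) :
    ∑ ν, ∑ α, vup v x ν * vup v x α * pd μ (fun y => qhat b v y α ν) x
      = -pd μ (fun y => b y / (1 + b y)) x := by
  calc ∑ ν, ∑ α, vup v x ν * vup v x α * pd μ (fun y => qhat b v y α ν) x
      = -(pd μ (fun y => b y / (1 + b y)) x * ((∑ ν, vup v x ν * v x ν) * ∑ α, vup v x α * v x α)
          + b x / (1 + b x) * ((∑ ν, vup v x ν * v x ν) * (∑ α, vup v x α * pd μ (fun y => v y α) x)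
            + (∑ ν, vup v x ν * pd μ (fun y => v y ν) x) * ∑ α, vup v x α * v x α)) := by
        rw [Finset.sum_mul_sum, Finset.sum_mul_sum, Finset.sum_mul_sum]
        simp only [pd_qhat hf hv, Finset.mul_sum, ← Finset.sum_add_distrib,
          ← Finset.sum_neg_distrib]
        exact Finset.sum_congr rfl fun ν _ => Finset.sum_congr rfl fun α _ => by ring
    _ = -pd μ (fun y => b y / (1 + b y)) x := by rw [hN, hO]; ring

theorem sum_vup_mul_geodesic_residual (hf : DifferentiableAt ℝ (fun y => b y / (1 + b y)) x)
    (hv : ∀ α, DifferentiableAt ℝ (fun y => v y α) x) (hN : ∑ ε, vup v x ε * v x ε = 1)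
    (hO : ∀ μ, ∑ α, vup v x α * pd μ (fun y => v y α) x = 0) (μ : Fin 4) :
    ∑ ν, vup v x ν * (pd ν (fun y => v y μ) x - ∑ ε, Γhat b v ε μ ν x * v x ε)
      = ∑ ν, vup v x ν * pd ν (fun y => v y μ) x
          + (1 + b x) / 2 * pd μ (fun y => b y / (1 + b y)) x := by
  simp only [mul_sub, Finset.sum_sub_distrib]
  rw [sum_vup_mul_sum_Γhat_mul b v x hN, sum_vup_vup_pd_qhat hf hv hN hO]
  ring

end DraggedMetric

lemma exp_dragging_factor (Ψ : (Fin 4 → ℝ) → ℝ) :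
    (fun y => (Real.exp (-2 * Ψ y) - 1) / (1 + (Real.exp (-2 * Ψ y) - 1)))
      = fun y => 1 - Real.exp (2 * Ψ y) := by
  funext y
  rw [add_sub_cancel, sub_div, div_self (Real.exp_pos _).ne', one_div, ← Real.exp_neg]
  ring_nf

lemma hasDerivAt_one_sub_exp_two_mul (t : ℝ) :
    HasDerivAt (fun s => 1 - Real.exp (2 * s)) (-(2 * Real.exp (2 * t))) t := by
  simpa [mul_comm] using (((hasDerivAt_id t).const_mul 2).exp).const_sub 1

/-- Any accelerated motion in Minkowski space whose acceleration is a gradient,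
`a_μ = v^ν ∂_ν v_μ = ∂_μ Ψ`, is a geodesic of the dragged metric
`q̂_{μν} = η_{μν} − (b/(1+b)) v_μ v_ν` with `1 + b = e^{−2Ψ}`. -/
theorem accelerated_path_is_dragged_geodesic
    (U : Set (Fin 4 → ℝ)) (hUopen : IsOpen U)
    (Ψ : (Fin 4 → ℝ) → ℝ) (v : (Fin 4 → ℝ) → Fin 4 → ℝ)
    (hΨdiff : ∀ x ∈ U, DifferentiableAt ℝ Ψ x)
    (hvdiff : ∀ x ∈ U, ∀ μ : Fin 4, DifferentiableAt ℝ (fun y => v y μ) x)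
    (hnorm : ∀ x ∈ U, ∑ μ, ∑ ν, ηm μ ν * v x μ * v x ν = 1)
    (haccel : ∀ x ∈ U, ∀ μ : Fin 4,
      ∑ ν, vup v x ν * pd ν (fun y => v y μ) x = pd μ Ψ x) :
    ∀ x ∈ U, ∀ μ : Fin 4,
      ∑ ν, vup v x ν * (pd ν (fun y => v y μ) x
        - ∑ ε, Γhat (fun y => Real.exp (-2 * Ψ y) - 1) v ε μ ν x * v x ε) = 0 := by
  intro x hx μ
  have hN : ∑ ε, vup v x ε * v x ε = 1 := (sum_vup_mul v x _).trans (hnorm x hx)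
  have hO := sum_vup_mul_pd_eq_zero_of_eventuallyEq (hvdiff x hx)
    (eventually_of_mem (hUopen.mem_nhds hx) hnorm)
  have hf : DifferentiableAt ℝ
      (fun y => (Real.exp (-2 * Ψ y) - 1) / (1 + (Real.exp (-2 * Ψ y) - 1))) x := by
    rw [exp_dragging_factor]
    exact (hasDerivAt_one_sub_exp_two_mul _).differentiableAt.comp x (hΨdiff x hx)
  rw [sum_vup_mul_geodesic_residual hf (hvdiff x hx) hN hO, haccel x hx, exp_dragging_factor,
    pd_comp μ (hasDerivAt_one_sub_exp_two_mul _) (hΨdiff x hx), add_sub_cancel]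
  have hexp : Real.exp (-2 * Ψ x) * Real.exp (2 * Ψ x) = 1 := by
    rw [← Real.exp_add]
    simp
  linear_combination (-pd μ Ψ x) * hexp
end

section
/- Let n ≥ 1, let g be an invertible symmetric n×n real matrix, let v ∈ ℝⁿ be a covector with vᵀ g⁻¹ v = 1, and let b ∈ ℝ with 1 + b > 0. Define the covariant dragged metric q̂ = g − (b/(1+b)) v vᵀ and the vector û = √(1+b) · g⁻¹ v. Then: (i) ûᵀ q̂ û = 1 (û is q̂-normalized); (ii) the covariant components û_♭ := q̂ û satisfy û_♭ = v/√(1+b); and (iii) q̂ − û_♭ û_♭ᵀ = g − v vᵀ, i.e. the orthogonal projector ĥ_{μν} = q̂_{μν} − û_μ û_ν of the dragged metric coincides with the projector h_{μν} = g_{μν} − v_μ v_ν of the background metric. -/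
open Matrix

/-- For the covariant dragged metric `q̂ = g − (b/(1+b)) v vᵀ` and the normalized velocity
`û = √(1+b) g⁻¹ v`: (i) `û` is `q̂`-normalized, (ii) its covariant components are
`û_♭ = q̂ û = v/√(1+b)`, and (iii) the projector `q̂ − û_♭ û_♭ᵀ` coincides with the
background projector `g − v vᵀ`. -/
theorem dragged_projector_coincides
    (n : ℕ) (hn : 1 ≤ n)
    (g : Matrix (Fin n) (Fin n) ℝ) (hsymm : g.IsSymm) (hg : IsUnit g.det)
    (v : Matrix (Fin n) (Fin 1) ℝ) (hv : vᵀ * g⁻¹ * v = 1)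
    (b : ℝ) (hb : 0 < 1 + b) :
    (Real.sqrt (1 + b) • (g⁻¹ * v))ᵀ * (g - (b / (1 + b)) • (v * vᵀ)) *
        (Real.sqrt (1 + b) • (g⁻¹ * v)) = 1 ∧
    (g - (b / (1 + b)) • (v * vᵀ)) * (Real.sqrt (1 + b) • (g⁻¹ * v))
        = (Real.sqrt (1 + b))⁻¹ • v ∧
    (g - (b / (1 + b)) • (v * vᵀ)) -
        ((g - (b / (1 + b)) • (v * vᵀ)) * (Real.sqrt (1 + b) • (g⁻¹ * v))) *
          ((g - (b / (1 + b)) • (v * vᵀ)) * (Real.sqrt (1 + b) • (g⁻¹ * v)))ᵀ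
      = g - v * vᵀ := by
  set s := Real.sqrt (1 + b) with hsdef
  have hspos : 0 < s := Real.sqrt_pos.2 hb
  have hs : s ≠ 0 := ne_of_gt hspos
  have hs2 : s * s = 1 + b := Real.mul_self_sqrt hb.le
  have hginv : g * g⁻¹ = 1 := Matrix.mul_nonsing_inv g hg
  have hinvsymm : g⁻¹ᵀ = g⁻¹ := by
    rw [Matrix.transpose_nonsing_inv, hsymm.eq]
  have hvvv : v * vᵀ * (g⁻¹ * v) = v := by
    rw [Matrix.mul_assoc, ← Matrix.mul_assoc vᵀ g⁻¹ v, hv, Matrix.mul_one]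
  have key : (g - (b / (1 + b)) • (v * vᵀ)) * (s • (g⁻¹ * v)) = s⁻¹ • v := by
    rw [Matrix.mul_smul, Matrix.sub_mul, Matrix.smul_mul, ← Matrix.mul_assoc g g⁻¹ v,
      hginv, Matrix.one_mul, hvvv, smul_sub, smul_smul, ← sub_smul]
    congr 1
    field_simp
    nlinarith [hs2]
  refine ⟨?_, key, ?_⟩
  · rw [Matrix.mul_assoc, key, Matrix.transpose_smul, Matrix.transpose_mul, hinvsymm,
      Matrix.smul_mul, Matrix.mul_smul, smul_smul, Matrix.mul_assoc vᵀ g⁻¹ v, 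
      ← Matrix.mul_assoc vᵀ g⁻¹ v, hv, mul_inv_cancel₀ hs, one_smul]
  · rw [key, Matrix.transpose_smul, Matrix.smul_mul, Matrix.mul_smul, smul_smul]
    have : s⁻¹ * s⁻¹ = 1 / (1 + b) := by
      field_simp; nlinarith [hs2]
    have h1 : b / (1 + b) + 1 / (1 + b) = 1 := by field_simp; ring
    rw [this, sub_sub, ← add_smul, h1, one_smul]
end
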